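/- Let A, B, C be a triangle, A₁ the point strictly between B and C with ∠BAA₁ = ∠A₁AC, B₁ the point strictly between A and C with ∠ABB₁ = ∠B₁BC, and J a point lying on both segment AA₁ and segment BB₁. If dist J A₁ = dist J B₁ and ∠ACB ≠ π/3, then dist A C = dist B C. -/

import Mathlib

/-!
Write `α = ∠BAA₁`, `β = ∠ABB₁`, `γ = ∠ACB`, so `2α + 2β + γ = π`, and by the exterior angle
theorem `∠AA₁B = α + γ`, `∠BB₁A = β + γ`. The law of sines in the triangles `JA₁B`, `ABJ`, `AJB₁`
gives `sin ∠AA₁B · JA₁ = sin β · BJ = sin α · AJ = sin ∠BB₁A · JB₁`, so `JA₁ = JB₁` forces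
`sin (α + γ) = sin (β + γ)`. Hence either `α = β`, and the triangle is isosceles, or
`α + β + 2γ = π`, which together with `2α + 2β + γ = π` gives `γ = π / 3`.
-/

open EuclideanGeometry Real

lemma Real.eq_or_add_eq_pi_of_sin_eq_sin {x y : ℝ} (hx : x ∈ Set.Icc 0 π) (hy : y ∈ Set.Icc 0 π)
    (h : sin x = sin y) : x = y ∨ x + y = π := by
  have hcos : cos x = cos y ∨ cos x = -cos y :=
    sq_eq_sq_iff_eq_or_eq_neg.mp (by rw [cos_sq', cos_sq', h])
  rcases hcos with hcos | hcos
  · exact .inl (injOn_cos hx hy hcos)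
  · have hy' : π - y ∈ Set.Icc 0 π := ⟨by linarith [hy.2], by linarith [hy.1]⟩
    have := injOn_cos hx hy' (by rw [cos_pi_sub, hcos])
    exact .inr (by linarith)

namespace EuclideanGeometry

variable {V P : Type*} [NormedAddCommGroup V] [InnerProductSpace ℝ V] [MetricSpace P]
  [NormedAddTorsor V P]

lemma sbtw_of_mem_affineSpan_pair_of_not_collinear {A B C A₁ B₁ J : P}
    (hABC : ¬Collinear ℝ ({A, B, C} : Set P)) (hA₁ : Sbtw ℝ B A₁ C) (hB₁ : Sbtw ℝ A B₁ C)
    (hJA : J ∈ line[ℝ, A, A₁]) (hJB : J ∈ line[ℝ, B, B₁]) : Sbtw ℝ A J A₁ :=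
  sbtw_of_sbtw_of_sbtw_of_mem_affineSpan_pair
    (t := ⟨![A, B, C], affineIndependent_iff_not_collinear_set.2 hABC⟩)
    (i₁ := 0) (i₂ := 1) (i₃ := 2) (by decide) hA₁ hB₁ hJA hJB

lemma angle_eq_half_angle_add_angle_of_bisector {A B C A₁ : P} (hA₁ : Sbtw ℝ B A₁ C)
    (hbis : ∠ B A A₁ = ∠ A₁ A C) : ∠ A A₁ B = ∠ B A C / 2 + ∠ A C B := by
  have hext := exterior_angle_eq_angle_add_angle (p₃ := A) B hA₁
  have hsplit := angle_add_angle_eq_of_sbtw (p := A) hA₁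
  rw [hA₁.symm.angle_eq_right A] at hext
  linarith

lemma sin_angle_mul_dist_of_bisector {A B C A₁ J : P} (hA₁ : Sbtw ℝ B A₁ C)
    (hJ : Sbtw ℝ A J A₁) (hbis : ∠ A B J = ∠ J B C) :
    sin (∠ A A₁ B) * dist J A₁ = sin (∠ A B J) * dist B J := by
  rw [← hJ.symm.angle_eq_left B, hbis, angle_comm J B C, ← hA₁.angle_eq_left J]
  exact (law_sin A₁ B J).symm

end EuclideanGeometry

theorem stmt_11 (A B C A₁ B₁ J : EuclideanSpace ℝ (Fin 2))
    (hABC : ¬ Collinear ℝ ({A, B, C} : Set (EuclideanSpace ℝ (Fin 2))))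
    (hA₁ : Sbtw ℝ B A₁ C) (hA₁' : ∠ B A A₁ = ∠ A₁ A C)
    (hB₁ : Sbtw ℝ A B₁ C) (hB₁' : ∠ A B B₁ = ∠ B₁ B C)
    (hJA : J ∈ segment ℝ A A₁) (hJB : J ∈ segment ℝ B B₁)
    (h : dist J A₁ = dist J B₁)
    (h2 : ∠ A C B ≠ π / 3) :
    dist A C = dist B C := by
  have hBAC : ¬Collinear ℝ ({B, A, C} : Set (EuclideanSpace ℝ (Fin 2))) := by
    rwa [Set.insert_comm]
  have hJ_AA₁ := (mem_segment_iff_wbtw.mp hJA).mem_affineSpan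
  have hJ_BB₁ := (mem_segment_iff_wbtw.mp hJB).mem_affineSpan
  have hAJ := sbtw_of_mem_affineSpan_pair_of_not_collinear hABC hA₁ hB₁ hJ_AA₁ hJ_BB₁
  have hBJ := sbtw_of_mem_affineSpan_pair_of_not_collinear hBAC hB₁ hA₁ hJ_BB₁ hJ_AA₁
  have hbisB : ∠ A B J = ∠ J B C := by rwa [hBJ.angle_eq_right, hBJ.angle_eq_left]
  have hbisA : ∠ B A J = ∠ J A C := by rwa [hAJ.angle_eq_right, hAJ.angle_eq_left]
  have hsinA := sin_angle_mul_dist_of_bisector hA₁ hAJ hbisB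
  have hsinB := sin_angle_mul_dist_of_bisector hB₁ hBJ hbisA
  have hsin : sin (∠ A A₁ B) = sin (∠ B B₁ A) := by
    refine mul_right_cancel₀ (dist_ne_zero.mpr hAJ.ne_right) ?_
    rw [hsinA, h, hsinB, law_sin A B J, dist_comm J A, angle_comm J A B]
  have hα := angle_eq_half_angle_add_angle_of_bisector hA₁ hA₁'
  have hβ := angle_eq_half_angle_add_angle_of_bisector hB₁ hB₁'
  have hsum := angle_add_angle_add_angle_eq_pi C (ne₁₂_of_not_collinear hBAC)
  rw [angle_comm B C A] at hβ hsum
  rw [angle_comm C A B] at hsum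
  rcases eq_or_add_eq_pi_of_sin_eq_sin ⟨angle_nonneg .., angle_le_pi ..⟩
    ⟨angle_nonneg .., angle_le_pi ..⟩ hsin with hαβ | hsupp
  · rw [dist_comm A C, dist_comm B C]
    refine dist_eq_of_angle_eq_angle_of_angle_ne_pi ?_ (angle_ne_pi_of_not_collinear ?_)
    · rw [angle_comm C A B, angle_comm C B A]; linarith
    · rwa [Set.pair_comm]
  · exact absurd (by linarith) h2
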